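/- arXiv:1907.08225 — 5 statements merged into one kernel-verified Lean document; each statement's English description precedes it below -/
import Mathlib

section
/- Let π be a policy that reaches the goal everywhere and let π' be a policy that is optimal with respect to the reward −d^π. Then for every state s, the dynamical distance of π' satisfies d^{π'}(s) ≤ d^π(s). -/
/-- The step map induced by policy `π` in a deterministic MDP with transition `T`. -/
def stepMap {S A : Type*} (T : S → A → S) (π : S → A) : S → S := fun s => T s (π s)

/-- The dynamical distance `d^π(s)`: the least `n : ℕ` with `(stepMap T π)^[n] s = g`,
and `⊤` (infinity) if no such `n` exists. -/
noncomputable def dynDist {S A : Type*} (T : S → A → S) (g : S) (π : S → A) (s : S) : ℕ∞ :=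
  sInf {n : ℕ∞ | ∃ m : ℕ, n = (m : ℕ∞) ∧ (stepMap T π)^[m] s = g}

/-- `π` reaches the goal everywhere: the dynamical distance is finite from every state. -/
def ReachesEverywhere {S A : Type*} (T : S → A → S) (g : S) (π : S → A) : Prop :=
  ∀ s, dynDist T g π s < ⊤

/-- The loss of `π'` relative to `π` from start state `s`:
`L_π(π', s) = ∑_{i=0}^{d^{π'}(s)-1} γ^i * d^π((stepMap T π')^[i] s)`. -/
noncomputable def lossOf {S A : Type*} (T : S → A → S) (g : S) (γ : ℝ)
    (π π' : S → A) (s : S) : ℝ :=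
  ∑ i ∈ Finset.range (dynDist T g π' s).toNat,
    γ ^ i * ((dynDist T g π ((stepMap T π')^[i] s)).toNat : ℝ)

/-- `π'` is optimal with respect to the reward `-d^π`. -/
def OptimalWrt {S A : Type*} (T : S → A → S) (g : S) (γ : ℝ) (π π' : S → A) : Prop :=
  ReachesEverywhere T g π' ∧
    ∀ π'' : S → A, ReachesEverywhere T g π'' → ∀ s, lossOf T g γ π π' s ≤ lossOf T g γ π π'' s

private lemma dynDist_eq_of' {S A : Type*} {T : S → A → S} {g : S} {π : S → A} {s : S} {k : ℕ}
    (h1 : (stepMap T π)^[k] s = g) (h2 : ∀ j < k, (stepMap T π)^[j] s ≠ g) :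
    dynDist T g π s = (k : ℕ∞) := by
  refine le_antisymm (sInf_le ⟨k, rfl, h1⟩) (le_sInf ?_)
  rintro x ⟨m, rfl, hm⟩
  exact Nat.cast_le.mpr (le_of_not_gt fun hc => h2 m hc hm)

private lemma dynDist_spec' {S A : Type*} {T : S → A → S} {g : S} {π : S → A} {s : S}
    (h : dynDist T g π s < ⊤) :
    (stepMap T π)^[(dynDist T g π s).toNat] s = g ∧
      ∀ k < (dynDist T g π s).toNat, (stepMap T π)^[k] s ≠ g := by
  classical
  have hex : ∃ m : ℕ, (stepMap T π)^[m] s = g := by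
    by_contra hc
    push_neg at hc
    have hemp : {n : ℕ∞ | ∃ m : ℕ, n = (m : ℕ∞) ∧ (stepMap T π)^[m] s = g} = ∅ := by
      ext y
      simp only [Set.mem_setOf_eq, Set.mem_empty_iff_false, iff_false]
      rintro ⟨m, rfl, hm⟩
      exact hc m hm
    rw [dynDist, hemp, sInf_empty] at h
    exact absurd h (lt_irrefl ⊤)
  have heq : dynDist T g π s = (Nat.find hex : ℕ∞) := by
    refine le_antisymm (sInf_le ⟨Nat.find hex, rfl, Nat.find_spec hex⟩) (le_sInf ?_)
    rintro x ⟨m, rfl, hm⟩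
    exact Nat.cast_le.mpr (Nat.find_min' hex hm)
  rw [heq, ENat.toNat_coe]
  exact ⟨Nat.find_spec hex, fun k hk => Nat.find_min hex hk⟩

private lemma dynDist_iterate' {S A : Type*} {T : S → A → S} {g : S} {π : S → A} {s : S}
    (h : dynDist T g π s < ⊤) (i : ℕ) (hi : i ≤ (dynDist T g π s).toNat) :
    dynDist T g π ((stepMap T π)^[i] s) = (((dynDist T g π s).toNat - i : ℕ) : ℕ∞) := by
  obtain ⟨h1, h2⟩ := dynDist_spec' h
  apply dynDist_eq_of'
  · rw [← Function.iterate_add_apply, Nat.sub_add_cancel hi]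
    exact h1
  · intro j hj
    rw [← Function.iterate_add_apply]
    exact h2 (j + i) (by omega)

private lemma dynDist_goal' {S A : Type*} {T : S → A → S} {g : S} (π : S → A) :
    dynDist T g π g = (0 : ℕ∞) := by
  have h0 : ((0 : ℕ) : ℕ∞) = (0 : ℕ∞) := by norm_num
  rw [← h0]
  exact dynDist_eq_of' rfl (fun j hj => absurd hj (Nat.not_lt_zero j))

theorem stmt0 {S A : Type*} [Nonempty S] [Nonempty A]
    (T : S → A → S) (g : S) (hg : ∀ a : A, T g a = g)
    (γ : ℝ) (hγ0 : 0 < γ) (hγ1 : γ ≤ 1)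
    (π π' : S → A)
    (hπ : ReachesEverywhere T g π)
    (hπ' : OptimalWrt T g γ π π') :
    ∀ s : S, dynDist T g π' s ≤ dynDist T g π s := by
  classical
  obtain ⟨hre', hopt⟩ := hπ'
  have hDcast : ∀ x : S, dynDist T g π x = ((dynDist T g π x).toNat : ℕ∞) :=
    fun x => (ENat.coe_toNat (hπ x).ne).symm
  have hD'cast : ∀ x : S, dynDist T g π' x = ((dynDist T g π' x).toNat : ℕ∞) :=
    fun x => (ENat.coe_toNat (hre' x).ne).symm
  set D : S → ℕ := fun x => (dynDist T g π x).toNat with hDdef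
  set D' : S → ℕ := fun x => (dynDist T g π' x).toNat with hD'def
  suffices hmain : ∀ x, D' x ≤ D x by
    intro s
    rw [hDcast s, hD'cast s]
    exact_mod_cast hmain s
  by_contra hc
  push_neg at hc
  obtain ⟨x0, hx0⟩ := hc
  have hex : ∃ n : ℕ, ∃ x : S, D x = n ∧ n < D' x := ⟨D x0, x0, rfl, hx0⟩
  obtain ⟨x, hDx, hxlt⟩ : ∃ x : S, D x = Nat.find hex ∧ Nat.find hex < D' x :=
    Nat.find_spec hex
  set n := Nat.find hex with hn
  have hmin : ∀ y : S, D y < n → D' y ≤ D y := by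
    intro y hy
    by_contra h
    push_neg at h
    exact absurd (Nat.find_le ⟨y, rfl, h⟩) (not_le.mpr hy)
  set m := D' x with hm
  -- n ≥ 1
  have hn1 : 1 ≤ n := by
    rcases Nat.eq_zero_or_pos n with h0 | h
    · exfalso
      have hspec := (dynDist_spec' (hπ x)).1
      have hDx0 : (dynDist T g π x).toNat = 0 := by
        rw [show (dynDist T g π x).toNat = D x from rfl, hDx, h0]
      rw [hDx0, Function.iterate_zero_apply] at hspec
      -- x = g, so D' x = 0, contradicting hxlt
      have : D' x = 0 := by
        rw [hD'def]
        simp only []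
        rw [hspec, dynDist_goal']
        rfl
      omega
    · exact h
  have hmn : n + 1 ≤ m := hxlt
  -- trajectory distances for π'
  have htraj : ∀ i, i ≤ m → D' ((stepMap T π')^[i] x) = m - i := by
    intro i hi
    have h := dynDist_iterate' (hre' x) i hi
    show (dynDist T g π' ((stepMap T π')^[i] x)).toNat = m - i
    rw [h, ENat.toNat_coe]
  -- termwise lower bound
  have hterm : ∀ i, i < m → min n (m - i) ≤ D ((stepMap T π')^[i] x) := by
    intro i hi
    rcases le_or_gt n (D ((stepMap T π')^[i] x)) with h | h
    · exact le_trans (min_le_left _ _) h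
    · have h1 := hmin _ h
      rw [htraj i hi.le] at h1
      exact le_trans (min_le_right _ _) h1
  -- loss of π itself
  have hlossπ : lossOf T g γ π π x = ∑ i ∈ Finset.range n, γ ^ i * ((n - i : ℕ) : ℝ) := by
    rw [lossOf]
    have hnx : (dynDist T g π x).toNat = n := hDx
    rw [hnx]
    refine Finset.sum_congr rfl ?_
    intro i hi
    rw [Finset.mem_range] at hi
    have h := dynDist_iterate' (hπ x) i (by rw [hnx]; omega)
    rw [h, ENat.toNat_coe, hnx]
  -- loss of π' from x
  have hlossπ' : lossOf T g γ π π' x =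
      ∑ i ∈ Finset.range m, γ ^ i * ((D ((stepMap T π')^[i] x) : ℕ) : ℝ) := by
    rw [lossOf]
  -- lower bound chain
  have hbound : (∑ i ∈ Finset.range n, γ ^ i * ((n - i : ℕ) : ℝ)) + γ ^ n ≤
      lossOf T g γ π π' x := by
    rw [hlossπ']
    have step1 : ∑ i ∈ Finset.range m, γ ^ i * ((min n (m - i) : ℕ) : ℝ) ≤
        ∑ i ∈ Finset.range m, γ ^ i * ((D ((stepMap T π')^[i] x) : ℕ) : ℝ) := by
      refine Finset.sum_le_sum ?_
      intro i hi
      rw [Finset.mem_range] at hi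
      exact mul_le_mul_of_nonneg_left (Nat.cast_le.mpr (hterm i hi)) (pow_nonneg hγ0.le i)
    refine le_trans ?_ step1
    have step2 : ∑ i ∈ Finset.range (n + 1), γ ^ i * ((min n (m - i) : ℕ) : ℝ) ≤
        ∑ i ∈ Finset.range m, γ ^ i * ((min n (m - i) : ℕ) : ℝ) := by
      refine Finset.sum_le_sum_of_subset_of_nonneg (Finset.range_subset_range.mpr hmn) ?_
      intro i _ _
      positivity
    refine le_trans ?_ step2
    rw [Finset.sum_range_succ]
    have step3 : ∑ i ∈ Finset.range n, γ ^ i * ((n - i : ℕ) : ℝ) ≤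
        ∑ i ∈ Finset.range n, γ ^ i * ((min n (m - i) : ℕ) : ℝ) := by
      refine Finset.sum_le_sum ?_
      intro i hi
      rw [Finset.mem_range] at hi
      refine mul_le_mul_of_nonneg_left (Nat.cast_le.mpr ?_) (pow_nonneg hγ0.le i)
      omega
    have step4 : γ ^ n ≤ γ ^ n * ((min n (m - n) : ℕ) : ℝ) := by
      have h1 : (1 : ℝ) ≤ ((min n (m - n) : ℕ) : ℝ) := by
        have : 1 ≤ min n (m - n) := by omega
        exact_mod_cast this
      nlinarith [pow_pos hγ0 n]
    exact add_le_add step3 step4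
  -- contradiction with optimality against π itself
  have hopt1 : lossOf T g γ π π' x ≤ lossOf T g γ π π x := hopt π hπ x
  rw [hlossπ] at hopt1
  have : γ ^ n ≤ 0 := by linarith
  exact absurd this (not_le.mpr (pow_pos hγ0 n))
end

section
/- Suppose the policy iteration has converged, i.e., π is a policy that reaches the goal everywhere and π is itself optimal with respect to the reward −d^π. Then d^π(s) = d*(s) for every state s; in particular π takes a shortest path (minimal number of time steps) to the goal from every state. -/
/-- The optimal dynamical distance: the infimum of `d^π(s)` over all policies. -/
noncomputable def optDist {S A : Type*} (T : S → A → S) (g : S) (s : S) : ℕ∞ :=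
  ⨅ π : S → A, dynDist T g π s

section Aux

attribute [local instance] Classical.propDecidable

variable {S A : Type*}

lemma dynDist_dite (T : S → A → S) (g : S) (π : S → A) (s : S) :
    dynDist T g π s =
      if h : ∃ m : ℕ, (stepMap T π)^[m] s = g then (Nat.find h : ℕ∞) else ⊤ := by
  split_ifs with h
  · refine le_antisymm (sInf_le ⟨Nat.find h, rfl, Nat.find_spec h⟩) (le_sInf ?_)
    rintro x ⟨m, rfl, hm⟩
    exact_mod_cast Nat.find_le hm
  · rw [dynDist]
    have hset : {n : ℕ∞ | ∃ m : ℕ, n = (m : ℕ∞) ∧ (stepMap T π)^[m] s = g} = ∅ := by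
      ext x
      simp only [Set.mem_setOf_eq, Set.mem_empty_iff_false, iff_false, not_exists]
      rintro m ⟨rfl, hm⟩
      exact h ⟨m, hm⟩
    rw [hset, sInf_empty]

variable {T : S → A → S} {g : S}

lemma reaches_exists {π : S → A} (hπ : ReachesEverywhere T g π) (s : S) :
    ∃ m : ℕ, (stepMap T π)^[m] s = g := by
  by_contra h
  have h2 := hπ s
  rw [dynDist_dite, dif_neg h] at h2
  exact lt_irrefl _ h2

lemma dN_eq_find {π : S → A} {s : S} (h : ∃ m : ℕ, (stepMap T π)^[m] s = g) :
    (dynDist T g π s).toNat = Nat.find h := by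
  rw [dynDist_dite, dif_pos h]; simp

lemma dynDist_eq_coe {π : S → A} (hπ : ReachesEverywhere T g π) (s : S) :
    dynDist T g π s = ((dynDist T g π s).toNat : ℕ∞) := by
  rw [dN_eq_find (reaches_exists hπ s), dynDist_dite, dif_pos (reaches_exists hπ s)]

lemma iterate_dN {π : S → A} (hπ : ReachesEverywhere T g π) (s : S) :
    (stepMap T π)^[(dynDist T g π s).toNat] s = g := by
  have h := reaches_exists hπ s
  rw [dN_eq_find h]; exact Nat.find_spec h

lemma dN_le {π : S → A} (hπ : ReachesEverywhere T g π) (s : S) {m : ℕ}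
    (hm : (stepMap T π)^[m] s = g) : (dynDist T g π s).toNat ≤ m := by
  rw [dN_eq_find (reaches_exists hπ s)]; exact Nat.find_le hm

lemma dN_shift {π : S → A} (hπ : ReachesEverywhere T g π) (s : S) {i : ℕ}
    (hi : i ≤ (dynDist T g π s).toNat) :
    (dynDist T g π ((stepMap T π)^[i] s)).toNat = (dynDist T g π s).toNat - i := by
  set n := (dynDist T g π s).toNat with hn
  apply le_antisymm
  · apply dN_le hπ
    rw [← Function.iterate_add_apply, Nat.sub_add_cancel hi]
    exact iterate_dN hπ s
  · have hk := iterate_dN hπ ((stepMap T π)^[i] s)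
    rw [← Function.iterate_add_apply] at hk
    have := dN_le hπ s hk
    omega

lemma dN_goal {π : S → A} (hπ : ReachesEverywhere T g π) : (dynDist T g π g).toNat = 0 :=
  Nat.le_zero.mp (dN_le hπ g (m := 0) rfl)

lemma dN_pos {π : S → A} (hπ : ReachesEverywhere T g π) {s : S} (hs : s ≠ g) :
    0 < (dynDist T g π s).toNat := by
  rcases Nat.eq_zero_or_pos (dynDist T g π s).toNat with h | h
  · exact absurd (by simpa [h] using iterate_dN hπ s) hs
  · exact h

noncomputable def Fsum (γ : ℝ) (n : ℕ) : ℝ :=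
  ∑ i ∈ Finset.range n, γ ^ i * ((n - i : ℕ) : ℝ)

lemma Fsum_succ (γ : ℝ) (n : ℕ) :
    Fsum γ (n + 1) = ((n : ℝ) + 1) + γ * Fsum γ n := by
  unfold Fsum
  rw [Finset.sum_range_succ', Finset.mul_sum]
  simp only [Nat.succ_sub_succ, pow_zero, Nat.sub_zero, one_mul]
  rw [add_comm]
  congr 1
  · push_cast; ring
  · apply Finset.sum_congr rfl
    intro i _
    rw [pow_succ]
    ring

lemma Fsum_strictMono {γ : ℝ} (hγ0 : 0 < γ) : StrictMono (Fsum γ) := by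
  apply strictMono_nat_of_lt_succ
  intro n
  have h1 : Fsum γ n + γ ^ n ≤ Fsum γ (n + 1) := by
    unfold Fsum
    rw [Finset.sum_range_succ]
    have h2 : (n + 1 - n : ℕ) = 1 := by omega
    rw [h2]
    simp only [Nat.cast_one, mul_one]
    gcongr with i hi
    omega
  have := pow_pos hγ0 n
  linarith

lemma loss_self {γ : ℝ} {π : S → A} (hπ : ReachesEverywhere T g π) (s : S) :
    lossOf T g γ π π s = Fsum γ ((dynDist T g π s).toNat) := by
  unfold lossOf Fsum
  apply Finset.sum_congr rfl
  intro i hi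
  rw [dN_shift hπ s (Finset.mem_range.mp hi).le]

lemma one_step {π : S → A} {γ : ℝ} (hγ0 : 0 < γ)
    (hπ : ReachesEverywhere T g π) (hconv : OptimalWrt T g γ π π)
    (s : S) (a : A) :
    (dynDist T g π s).toNat ≤ (dynDist T g π (T s a)).toNat + 1 := by
  by_contra hcon
  push_neg at hcon
  set σ₁ := Function.update π s a with hσ₁
  set D := (dynDist T g π (T s a)).toNat with hD
  set N := (dynDist T g π s).toNat with hN
  -- hcon : D + 1 < N
  have hstep1 : stepMap T σ₁ s = T s a := by
    simp [stepMap, hσ₁]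
  have hstep2 : ∀ x, x ≠ s → stepMap T σ₁ x = stepMap T π x := by
    intro x hx
    simp [stepMap, hσ₁, Function.update_of_ne hx]
  have hsg : s ≠ g := by
    intro h
    have h0 : N = 0 := by rw [hN, h]; exact dN_goal hπ
    omega
  have htraj : ∀ j ≤ D, (stepMap T σ₁)^[j + 1] s = (stepMap T π)^[j] (T s a) := by
    intro j hj
    induction j with
    | zero => simpa using hstep1
    | succ k ih =>
      have hk : k ≤ D := by omega
      have hne : (stepMap T π)^[k] (T s a) ≠ s := by
        intro hcontra
        have h1 : (dynDist T g π ((stepMap T π)^[k] (T s a))).toNat = D - k :=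
          dN_shift hπ (T s a) (by omega)
        rw [hcontra, ← hN] at h1
        omega
      rw [Function.iterate_succ_apply', ih hk, hstep2 _ hne]
      exact (Function.iterate_succ_apply' _ _ _).symm
  have hreach : ReachesEverywhere T g σ₁ := by
    have key : ∀ (n : ℕ) (x : S), (dynDist T g π x).toNat = n →
        ∃ m, (stepMap T σ₁)^[m] x = g := by
      intro n
      induction n using Nat.strong_induction_on with
      | _ n ih =>
        intro x hx
        rcases eq_or_ne x g with rfl | hxg
        · exact ⟨0, rfl⟩
        · have hpos : 0 < n := hx ▸ dN_pos hπ hxg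
          rcases eq_or_ne x s with rfl | hxs
          · have hDn : D < n := by rw [← hx, ← hN]; omega
            obtain ⟨m, hm⟩ := ih D hDn (T x a) rfl
            exact ⟨m + 1, by rw [Function.iterate_succ_apply, hstep1, hm]⟩
          · have h1 : (dynDist T g π (stepMap T π x)).toNat = n - 1 := by
              have h2 := dN_shift hπ x (i := 1) (by omega)
              simpa [hx] using h2
            obtain ⟨m, hm⟩ := ih (n - 1) (by omega) _ h1
            exact ⟨m + 1, by rw [Function.iterate_succ_apply, hstep2 _ hxs, hm]⟩
    intro x
    obtain ⟨m, hm⟩ := key _ x rfl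
    rw [dynDist_dite, dif_pos ⟨m, hm⟩]
    exact lt_top_iff_ne_top.mpr (by simp)
  have hgoal1 : (stepMap T σ₁)^[D + 1] s = g := by
    rw [htraj D le_rfl]
    exact iterate_dN hπ (T s a)
  have hex : ∃ m, (stepMap T σ₁)^[m] s = g := ⟨D + 1, hgoal1⟩
  have hDn : (dynDist T g σ₁ s).toNat = D + 1 := by
    rw [dN_eq_find hex]
    refine le_antisymm (Nat.find_le hgoal1) ?_
    rw [Nat.le_find_iff]
    intro k hk hkg
    match k, hkg with
    | 0, hkg => exact hsg hkg
    | (j+1), hkg =>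
      have hj : j ≤ D := by omega
      rw [htraj j hj] at hkg
      have h1 : (dynDist T g π ((stepMap T π)^[j] (T s a))).toNat = D - j :=
        dN_shift hπ (T s a) hj
      rw [hkg, dN_goal hπ] at h1
      omega
  have hloss1 : lossOf T g γ π σ₁ s = (N : ℝ) + γ * Fsum γ D := by
    unfold lossOf
    rw [hDn, Finset.sum_range_succ']
    have hterms : ∀ i ∈ Finset.range D,
        γ ^ (i + 1) * ((dynDist T g π ((stepMap T σ₁)^[i + 1] s)).toNat : ℝ)
          = γ * (γ ^ i * ((D - i : ℕ) : ℝ)) := by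
      intro i hi
      have hi' : i < D := Finset.mem_range.mp hi
      rw [htraj i hi'.le, dN_shift hπ (T s a) hi'.le, pow_succ, ← hD]
      ring
    rw [Finset.sum_congr rfl hterms, ← Finset.mul_sum, ← Fsum]
    simp only [Function.iterate_zero_apply, pow_zero, one_mul, ← hN]
    ring
  have key := hconv.2 σ₁ hreach s
  rw [loss_self hπ s, ← hN, hloss1] at key
  obtain ⟨N', hN'⟩ : ∃ N', N = N' + 1 := ⟨N - 1, by omega⟩
  rw [hN', Fsum_succ] at key
  push_cast at key
  have hle : Fsum γ N' ≤ Fsum γ D := by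
    have h2 : γ * Fsum γ N' ≤ γ * Fsum γ D := by linarith
    exact le_of_mul_le_mul_left h2 hγ0
  have := (Fsum_strictMono hγ0).le_iff_le.mp hle
  omega

lemma dN_le_any {π : S → A} {γ : ℝ} (hγ0 : 0 < γ)
    (hπ : ReachesEverywhere T g π) (hconv : OptimalWrt T g γ π π) :
    ∀ (n : ℕ) (σ : S → A) (s : S), (stepMap T σ)^[n] s = g →
      (dynDist T g π s).toNat ≤ n := by
  intro n
  induction n with
  | zero => intro σ s hs; exact dN_le hπ s (m := 0) hs
  | succ k ih =>
    intro σ s hs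
    rw [Function.iterate_succ_apply] at hs
    have h1 := ih σ _ hs
    have h2 := one_step hγ0 hπ hconv s (σ s)
    have h3 : stepMap T σ s = T s (σ s) := rfl
    rw [h3] at h1
    omega

end Aux

theorem stmt2 {S A : Type*} [Nonempty S] [Nonempty A]
    (T : S → A → S) (g : S) (hg : ∀ a : A, T g a = g)
    (γ : ℝ) (hγ0 : 0 < γ) (hγ1 : γ ≤ 1)
    (π : S → A)
    (hπ : ReachesEverywhere T g π)
    (hconv : OptimalWrt T g γ π π) :
    ∀ s : S, dynDist T g π s = optDist T g s := by
  classical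
  intro s
  unfold optDist
  refine le_antisymm (le_iInf fun σ => ?_) (iInf_le _ π)
  by_cases h : ∃ m : ℕ, (stepMap T σ)^[m] s = g
  · rw [dynDist_dite T g σ, dif_pos h, dynDist_eq_coe hπ s]
    exact_mod_cast dN_le_any hγ0 hπ hconv (Nat.find h) σ s (Nat.find_spec h)
  · rw [dynDist_dite T g σ, dif_neg h]
    exact le_top
end

section
/- Let π be a policy that reaches the goal everywhere and let π' be a policy that is optimal with respect to the reward −d^π. If a state s satisfies d^π(s) = 1 (equivalently, s ≠ g and f_π(s) = g), then d^{π'}(s) = 1, i.e., the optimal policy also reaches the goal from s in exactly one step. -/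
open scoped Classical in
lemma dynDist_eq_find {S A : Type*} (T : S → A → S) (g : S) {π : S → A} {s : S}
    (h : ∃ m, (stepMap T π)^[m] s = g) :
    dynDist T g π s = (Nat.find h : ℕ∞) := by
  apply le_antisymm
  · exact sInf_le ⟨Nat.find h, rfl, Nat.find_spec h⟩
  · apply le_sInf
    rintro b ⟨m, rfl, hm⟩
    exact_mod_cast Nat.find_le hm

open scoped Classical in
lemma exists_iter_of_lt_top {S A : Type*} (T : S → A → S) (g : S) {π : S → A} {s : S}
    (h : dynDist T g π s < ⊤) :
    ∃ m, (stepMap T π)^[m] s = g := by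
  by_contra hc
  push_neg at hc
  have he : {n : ℕ∞ | ∃ m : ℕ, n = (m : ℕ∞) ∧ (stepMap T π)^[m] s = g} = ∅ := by
    ext n
    simp only [Set.mem_setOf_eq, Set.mem_empty_iff_false, iff_false]
    rintro ⟨m, rfl, hm⟩
    exact hc m hm
  rw [dynDist, he, sInf_empty] at h
  exact lt_irrefl _ h

open scoped Classical in
theorem stmt7 {S A : Type*} [Nonempty S] [Nonempty A]
    (T : S → A → S) (g : S) (hg : ∀ a : A, T g a = g)
    (γ : ℝ) (hγ0 : 0 < γ) (hγ1 : γ ≤ 1)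
    (π π' : S → A)
    (hπ : ReachesEverywhere T g π)
    (hπ' : OptimalWrt T g γ π π')
    (s : S) (hs : dynDist T g π s = 1) :
    dynDist T g π' s = 1 := by
  -- Facts about π from hs
  have hfin : dynDist T g π s < ⊤ := by rw [hs]; exact WithTop.one_lt_top
  have hex : ∃ m, (stepMap T π)^[m] s = g := exists_iter_of_lt_top T g hfin
  have hfind1 : Nat.find hex = 1 := by
    have := (dynDist_eq_find T g hex).symm.trans hs
    exact_mod_cast this
  have hstep : stepMap T π s = g := by
    have := Nat.find_spec hex
    rw [hfind1] at this
    simpa using this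
  have hsne : s ≠ g := by
    intro h
    have : (stepMap T π)^[0] s = g := by simpa using h
    have h0 : Nat.find hex ≤ 0 := Nat.find_le this
    omega
  -- distance to goal is positive when state ≠ g, for π
  have hpos : ∀ t : S, t ≠ g → 1 ≤ ((dynDist T g π t).toNat : ℝ) := by
    intro t ht
    have hf : dynDist T g π t < ⊤ := hπ t
    have he : ∃ m, (stepMap T π)^[m] t = g := exists_iter_of_lt_top T g hf
    have hne : Nat.find he ≠ 0 := by
      intro h0
      have := Nat.find_spec he
      rw [h0] at this
      exact ht (by simpa using this)
    rw [dynDist_eq_find T g he]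
    simp only [ENat.toNat_coe]
    exact_mod_cast Nat.one_le_iff_ne_zero.mpr hne
  -- loss of π itself at s equals 1
  have hloss_pi : lossOf T g γ π π s = 1 := by
    unfold lossOf
    rw [hs]
    simp [hs]
  -- optimality gives loss of π' ≤ 1
  have hle : lossOf T g γ π π' s ≤ 1 := by
    have := hπ'.2 π hπ s
    rwa [hloss_pi] at this
  -- analyze π'
  have hfin' : dynDist T g π' s < ⊤ := hπ'.1 s
  have hex' : ∃ m, (stepMap T π')^[m] s = g := exists_iter_of_lt_top T g hfin'
  set n := Nat.find hex' with hn
  have hd' : dynDist T g π' s = (n : ℕ∞) := dynDist_eq_find T g hex'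
  have hn1 : 1 ≤ n := by
    rcases Nat.eq_zero_or_pos n with h0 | h
    · exfalso
      have := Nat.find_spec hex'
      rw [← hn, h0] at this
      exact hsne (by simpa using this)
    · exact h
  have hn2 : n < 2 := by
    by_contra hge
    push_neg at hge
    -- loss of π' ≥ 1 + γ
    have hterm : ∀ i ∈ Finset.range n,
        0 ≤ γ ^ i * ((dynDist T g π ((stepMap T π')^[i] s)).toNat : ℝ) := by
      intro i _
      positivity
    have hsub : Finset.range 2 ⊆ Finset.range n := Finset.range_subset_range.mpr hge
    have hlow : ∑ i ∈ Finset.range 2,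
        γ ^ i * ((dynDist T g π ((stepMap T π')^[i] s)).toNat : ℝ) ≤ lossOf T g γ π π' s := by
      unfold lossOf
      rw [hd']
      simp only [ENat.toNat_coe]
      exact Finset.sum_le_sum_of_subset_of_nonneg hsub (fun i hi _ => hterm i hi)
    have hne1 : (stepMap T π')^[1] s ≠ g := Nat.find_min hex' (by omega)
    have h0 : ((dynDist T g π ((stepMap T π')^[0] s)).toNat : ℝ) = 1 := by
      simp [hs]
    have h1 : 1 ≤ ((dynDist T g π ((stepMap T π')^[1] s)).toNat : ℝ) := hpos _ hne1
    have : (1 : ℝ) + γ ≤ lossOf T g γ π π' s := by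
      refine le_trans ?_ hlow
      rw [Finset.sum_range_succ, Finset.sum_range_one, h0]
      have : γ * 1 ≤ γ ^ 1 * ((dynDist T g π ((stepMap T π')^[1] s)).toNat : ℝ) := by
        rw [pow_one]
        exact mul_le_mul_of_nonneg_left h1 hγ0.le
      nlinarith
    linarith
  have : n = 1 := by omega
  rw [hd', this]
  norm_num
end

section
/- Let f : S → S with f(g) = g, let s₀, s₁ ∈ S with s₀ ≠ g, suppose K ≥ 1, the least natural number with f^[K−1](s₁) = g is K − 1, and s₀ ∉ {f^[i](s₁) : i < K − 1}. Then for the updated function f̂ := Function.update f s₀ s₁ (which sends s₀ to s₁ and agrees with f elsewhere), the least natural number n with f̂^[n](s₀) = g equals K. -/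
theorem stmt8 {S : Type*} [DecidableEq S] (f : S → S) (g : S) (hg : f g = g)
    (s₀ s₁ : S) (hs₀ : s₀ ≠ g) (K : ℕ) (hK : 1 ≤ K)
    (h₁ : IsLeast {n : ℕ | f^[n] s₁ = g} (K - 1))
    (havoid : ∀ i < K - 1, f^[i] s₁ ≠ s₀) :
    IsLeast {n : ℕ | (Function.update f s₀ s₁)^[n] s₀ = g} K := by
  set F := Function.update f s₀ s₁ with hF
  have key : ∀ i ≤ K - 1, F^[i] s₁ = f^[i] s₁ := by
    intro i
    induction i with
    | zero => intro _; rfl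
    | succ n ih =>
      intro hn
      have hn' : n ≤ K - 1 := Nat.le_of_succ_le hn
      rw [Function.iterate_succ_apply', Function.iterate_succ_apply', ih hn']
      have hne : f^[n] s₁ ≠ s₀ := by
        rcases lt_or_eq_of_le hn' with h | h
        · exact havoid n h
        · subst h
          rw [h₁.1]
          exact fun e => hs₀ e.symm
      simp [hF, Function.update_of_ne hne]
  have hstep : F s₀ = s₁ := Function.update_self _ _ _
  constructor
  · show F^[K] s₀ = g
    have : F^[K] s₀ = F^[K - 1] (F s₀) := by
      rw [← Function.iterate_succ_apply, Nat.succ_eq_add_one, Nat.sub_add_cancel hK]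
    rw [this, hstep, key _ le_rfl, h₁.1]
  · intro n hn
    by_contra hlt
    push_neg at hlt
    have hn1 : 1 ≤ n := by
      rcases Nat.eq_zero_or_pos n with h | h
      · subst h; exact absurd hn hs₀
      · exact h
    have : f^[n - 1] s₁ = g := by
      rw [← key _ (by omega)]
      have : F^[n] s₀ = F^[n - 1] (F s₀) := by
        rw [← Function.iterate_succ_apply, Nat.succ_eq_add_one, Nat.sub_add_cancel hn1]
      have hn' : F^[n] s₀ = g := hn
      rw [this, hstep] at hn'
      exact hn'
    have := h₁.2 this
    omega
end

section
/- In a deterministic MDP with absorbing goal g, the infimum over stationary deterministic policies of the hitting time equals the shortest action-sequence length: for every state s, d*(s) equals the least n ∈ ℕ∞ such that there exists a finite sequence of actions a₀, …, a_{n−1} whose induced state sequence s₀ = s, s_{k+1} = T(s_k, a_k) satisfies s_n = g. -/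
section

variable {S A : Type*} (T : S → A → S) (g : S)

noncomputable def openLoopDist (s : S) : ℕ∞ :=
  sInf {n : ℕ∞ | ∃ as : List A, (as.length : ℕ∞) = n ∧ as.foldl T s = g}

def policyActions (π : S → A) : ℕ → S → List A
  | 0, _ => []
  | n + 1, s => π s :: policyActions π n (stepMap T π s)

section policyActions

variable {T} (π : S → A)

@[simp]
theorem length_policyActions (n : ℕ) (s : S) : (policyActions T π n s).length = n := by
  induction n generalizing s with
  | zero => rfl
  | succ n ih => simp [policyActions, ih]

theorem foldl_policyActions (n : ℕ) (s : S) :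
    (policyActions T π n s).foldl T s = (stepMap T π)^[n] s := by
  induction n generalizing s with
  | zero => rfl
  | succ n ih => exact ih (stepMap T π s)

end policyActions

section openLoopDist

variable {T g}

theorem openLoopDist_le_length {s : S} (as : List A) (h : as.foldl T s = g) :
    openLoopDist T g s ≤ as.length :=
  sInf_le ⟨as, rfl, h⟩

theorem openLoopDist_le_dynDist (π : S → A) (s : S) :
    openLoopDist T g s ≤ dynDist T g π s :=
  le_sInf <| by
    rintro _ ⟨n, rfl, hn⟩
    simpa using openLoopDist_le_length (policyActions T π n s) (by rw [foldl_policyActions, hn])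

variable (T g) in
noncomputable def greedyPolicy [Nonempty A] (s : S) : A :=
  Function.argmin fun a => openLoopDist T g (T s a)

theorem openLoopDist_stepMap_greedy_add_one_le [Nonempty A] {s : S} (hs : s ≠ g) :
    openLoopDist T g (stepMap T (greedyPolicy T g) s) + 1 ≤ openLoopDist T g s := by
  refine le_sInf ?_
  rintro _ ⟨_ | ⟨a, as⟩, rfl, has⟩
  · exact absurd has hs
  · calc openLoopDist T g (stepMap T (greedyPolicy T g) s) + 1
        ≤ openLoopDist T g (T s a) + 1 := by
          gcongr; exact Function.argmin_le (fun a => openLoopDist T g (T s a)) a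
      _ ≤ as.length + 1 := by gcongr; exact openLoopDist_le_length as has
      _ = (a :: as).length := by simp

theorem iterate_greedy_eq_of_openLoopDist_le [Nonempty A] (hg : ∀ a : A, T g a = g) (n : ℕ)
    {s : S} (hn : openLoopDist T g s ≤ n) : (stepMap T (greedyPolicy T g))^[n] s = g := by
  induction n generalizing s with
  | zero =>
    by_contra hs
    simpa using (openLoopDist_stepMap_greedy_add_one_le hs).trans hn
  | succ n ih =>
    rcases eq_or_ne s g with rfl | hs
    · exact Function.iterate_fixed (hg _) _
    rw [Function.iterate_succ_apply]
    refine ih ((ENat.add_le_add_iff_right ENat.one_ne_top).mp ?_)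
    exact_mod_cast (openLoopDist_stepMap_greedy_add_one_le hs).trans hn

theorem dynDist_greedy_le_openLoopDist [Nonempty A] (hg : ∀ a : A, T g a = g) (s : S) :
    dynDist T g (greedyPolicy T g) s ≤ openLoopDist T g s :=
  le_sInf <| by
    rintro _ ⟨as, rfl, has⟩
    exact sInf_le ⟨_, rfl,
      iterate_greedy_eq_of_openLoopDist_le hg _ (openLoopDist_le_length as has)⟩

end openLoopDist

end

theorem stmt11_general {S A : Type*} [Nonempty A]
    (T : S → A → S) (g : S) (hg : ∀ a : A, T g a = g) (s : S) :
    optDist T g s =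
      sInf {n : ℕ∞ | ∃ as : List A, (as.length : ℕ∞) = n ∧ as.foldl T s = g} :=
  le_antisymm (iInf_le_of_le _ (dynDist_greedy_le_openLoopDist hg s))
    (le_iInf fun π => openLoopDist_le_dynDist π s)

theorem stmt11 {S A : Type*} [Nonempty S] [Nonempty A]
    (T : S → A → S) (g : S) (hg : ∀ a : A, T g a = g) (s : S) :
    optDist T g s =
      sInf {n : ℕ∞ | ∃ as : List A, (as.length : ℕ∞) = n ∧ as.foldl T s = g} :=
  stmt11_general T g hg s
end
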